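/- arXiv:1806.01272 — 2 statements merged into one kernel-verified Lean document; each statement's English description precedes it below -/
import Mathlib

section
/- Let T be a rank one bounded operator on a complex Hilbert space H that is normal (T T* = T* T), not selfadjoint (T ≠ T*), and has tr T ≠ 0. Then the following are equivalent: (i) the semigroup S(T, T*) generated by T and T* is a selfadjoint-ideal (SI) semigroup; (ii) ‖T‖ = 1 and |tr T| = 1; (iii) S(T, T*) is a simple semigroup. -/
/-!
Normality forces a rank-one `T` with range `ℂ f` to be `λ • P`, where `P` is the orthogonal
projection onto `ℂ f` and `λ = ⟪f, T f⟫`; hence `‖T‖ = |λ|` and every element of `S(T, T*)` is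
`a • P` with `|a| = |λ| ^ n`, `n ≥ 1`. If `|λ| = 1`, then `B = (B A*) A` for all `A, B` in the
semigroup, so every nonempty ideal is everything: the semigroup is simple, and SI because it is
closed under adjoints. If `|λ| ≠ 1`, then `T*` is not a product of two elements (such products
have modulus `|λ| ^ n` with `n ≥ 2`), so removing `T*` leaves an ideal containing `T ≠ 0` but
not `T*`.
-/

open ContinuousLinearMap
open scoped ComplexInnerProductSpace

variable {H : Type*} [NormedAddCommGroup H] [InnerProductSpace ℂ H] [CompleteSpace H]

/-- `J` is a (two-sided) semigroup-ideal of `S`. -/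
def IsSemigroupIdeal {M : Type*} [Mul M] (S J : Set M) : Prop :=
  J ⊆ S ∧ ∀ T ∈ J, ∀ X ∈ S, X * T ∈ J ∧ T * X ∈ J

/-- `S` is a selfadjoint-ideal (SI) semigroup: every semigroup-ideal of `S`
is closed under adjoints. -/
def IsSI (S : Set (H →L[ℂ] H)) : Prop :=
  ∀ J : Set (H →L[ℂ] H), IsSemigroupIdeal S J → ∀ T ∈ J, adjoint T ∈ J

/-- `S` is simple: every ideal of `S` containing a nonzero element equals `S`. -/
def IsSimpleSemigroup {M : Type*} [Mul M] [Zero M] (S : Set M) : Prop :=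
  ∀ J : Set M, IsSemigroupIdeal S J → (∃ T ∈ J, T ≠ 0) → J = S

/-- `S(T, T*)`: the semigroup generated by `T` and `T*`, i.e. all finite products
`A₁ ⋯ A_k` (`k ≥ 1`) with each `Aᵢ ∈ {T, T*}`. -/
noncomputable def genSG (T : H →L[ℂ] H) : Set (H →L[ℂ] H) :=
  (Subsemigroup.closure {T, adjoint T} : Subsemigroup (H →L[ℂ] H))

section Semigroup

variable {M : Type*} [Mul M]

theorem IsSemigroupIdeal.eq_of_mem {S J : Set M}
    (hdiv : ∀ A ∈ S, ∀ B ∈ S, ∃ X ∈ S, X * A = B) (hJ : IsSemigroupIdeal S J) {A : M}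
    (hA : A ∈ J) : J = S :=
  hJ.1.antisymm fun B hB => by
    obtain ⟨X, hX, rfl⟩ := hdiv A (hJ.1 hA) B hB
    exact (hJ.2 A hA X hX).1

theorem isSimpleSemigroup_of_forall_exists_mul_eq [Zero M] {S : Set M}
    (hdiv : ∀ A ∈ S, ∀ B ∈ S, ∃ X ∈ S, X * A = B) : IsSimpleSemigroup S :=
  fun _ hJ ⟨_, hA, _⟩ => hJ.eq_of_mem hdiv hA

theorem isSemigroupIdeal_diff_singleton {S : Subsemigroup M} {E : M}
    (hE : ∀ X ∈ S, ∀ Y ∈ S, X * Y ≠ E) : IsSemigroupIdeal S ((S : Set M) \ {E}) :=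
  ⟨Set.sdiff_subset, fun A hA X hX =>
    ⟨⟨S.mul_mem hX hA.1, hE X hX A hA.1⟩, ⟨S.mul_mem hA.1 hX, hE A hA.1 X hX⟩⟩⟩

end Semigroup

section genSG

variable {T : H →L[ℂ] H}

theorem self_mem_genSG : T ∈ genSG T := Subsemigroup.subset_closure (Set.mem_insert _ _)

theorem adjoint_self_mem_genSG : adjoint T ∈ genSG T :=
  Subsemigroup.subset_closure (Set.mem_insert_of_mem _ rfl)

theorem adjoint_mem_genSG {A : H →L[ℂ] H} (hA : A ∈ genSG T) : adjoint A ∈ genSG T := by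
  induction hA using Subsemigroup.closure_induction with
  | mem B hB =>
    rcases hB with rfl | rfl
    · exact adjoint_self_mem_genSG
    · exact (adjoint_adjoint T).symm ▸ self_mem_genSG
  | mul B C _ _ hB hC =>
    rw [← star_eq_adjoint, star_mul]
    exact Subsemigroup.mul_mem _ hC hB

theorem isSI_genSG_of_forall_exists_mul_eq
    (hdiv : ∀ A ∈ genSG T, ∀ B ∈ genSG T, ∃ X ∈ genSG T, X * A = B) : IsSI (genSG T) :=
  fun _ hJ _ hA => hJ.eq_of_mem hdiv hA ▸ adjoint_mem_genSG (hJ.1 hA)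

theorem not_isSI_genSG_of_mul_ne_adjoint (hsa : T ≠ adjoint T)
    (hE : ∀ X ∈ genSG T, ∀ Y ∈ genSG T, X * Y ≠ adjoint T) : ¬ IsSI (genSG T) := fun hSI =>
  (hSI _ (isSemigroupIdeal_diff_singleton hE) T ⟨self_mem_genSG, hsa⟩).2 rfl

theorem not_isSimpleSemigroup_genSG_of_mul_ne_adjoint (hsa : T ≠ adjoint T)
    (hE : ∀ X ∈ genSG T, ∀ Y ∈ genSG T, X * Y ≠ adjoint T) : ¬ IsSimpleSemigroup (genSG T) := by
  intro hsimple
  have hT0 : T ≠ 0 := by rintro rfl; exact hsa (map_zero _).symm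
  have hJ := hsimple _ (isSemigroupIdeal_diff_singleton hE)
    ⟨T, ⟨self_mem_genSG, hsa⟩, hT0⟩
  have hmem := adjoint_self_mem_genSG (T := T)
  rw [← hJ] at hmem
  exact hmem.2 rfl

end genSG

section StarProjection

variable {P : H →L[ℂ] H} {c : ℂ}

theorem IsStarProjection.smul_mul_smul (hP : IsStarProjection P) (a b : ℂ) :
    (a • P) * (b • P) = (a * b) • P := by
  rw [smul_mul_smul_comm, hP.isIdempotentElem.eq]

theorem IsStarProjection.adjoint_smul (hP : IsStarProjection P) (a : ℂ) :
    adjoint (a • P) = starRingEnd ℂ a • P := by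
  rw [← star_eq_adjoint, star_smul, hP.isSelfAdjoint.star_eq]; rfl

theorem exists_eq_smul_of_mem_genSG_smul (hP : IsStarProjection P) {A : H →L[ℂ] H}
    (hA : A ∈ genSG (c • P)) :
    ∃ a : ℂ, ∃ n : ℕ, 0 < n ∧ ‖a‖ = ‖c‖ ^ n ∧ A = a • P := by
  induction hA using Subsemigroup.closure_induction with
  | mem B hB =>
    rcases hB with rfl | rfl
    · exact ⟨c, 1, one_pos, (pow_one _).symm, rfl⟩
    · exact ⟨starRingEnd ℂ c, 1, one_pos, by rw [Complex.norm_conj, pow_one],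
        hP.adjoint_smul c⟩
  | mul B C _ _ hB hC =>
    obtain ⟨a, n, hn, ha, rfl⟩ := hB
    obtain ⟨b, m, hm, hb, rfl⟩ := hC
    exact ⟨a * b, n + m, by omega, by rw [norm_mul, ha, hb, pow_add], hP.smul_mul_smul a b⟩

theorem exists_mul_eq_of_mem_genSG_smul (hP : IsStarProjection P) (hc : ‖c‖ = 1) :
    ∀ A ∈ genSG (c • P), ∀ B ∈ genSG (c • P), ∃ X ∈ genSG (c • P), X * A = B := by
  intro A hA B hB
  refine ⟨B * adjoint A, Subsemigroup.mul_mem _ hB (adjoint_mem_genSG hA), ?_⟩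
  obtain ⟨a, n, -, ha, rfl⟩ := exists_eq_smul_of_mem_genSG_smul hP hA
  obtain ⟨b, -, -, -, rfl⟩ := exists_eq_smul_of_mem_genSG_smul hP hB
  have ha1 : starRingEnd ℂ a * a = 1 := by
    rw [mul_comm, Complex.mul_conj, Complex.normSq_eq_norm_sq, ha, hc, one_pow, one_pow,
      Complex.ofReal_one]
  rw [hP.adjoint_smul, hP.smul_mul_smul, hP.smul_mul_smul, mul_assoc, ha1, mul_one]

theorem mul_ne_adjoint_of_mem_genSG_smul (hP : IsStarProjection P) (hP0 : P ≠ 0) (hc0 : c ≠ 0)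
    (hc : ‖c‖ ≠ 1) :
    ∀ X ∈ genSG (c • P), ∀ Y ∈ genSG (c • P), X * Y ≠ adjoint (c • P) := by
  intro X hX Y hY hXY
  obtain ⟨x, n, hn, hx, rfl⟩ := exists_eq_smul_of_mem_genSG_smul hP hX
  obtain ⟨y, m, hm, hy, rfl⟩ := exists_eq_smul_of_mem_genSG_smul hP hY
  rw [hP.smul_mul_smul, hP.adjoint_smul] at hXY
  have hpow : ‖c‖ ^ (n + m) = ‖c‖ ^ 1 := by
    rw [pow_add, ← hx, ← hy, ← norm_mul, smul_left_injective ℂ hP0 hXY, Complex.norm_conj,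
      pow_one]
  have := pow_right_injective₀ (norm_pos_iff.2 hc0) hc hpow
  omega

end StarProjection

theorem eq_inner_smul_starProjection_of_range_eq_span {T : H →L[ℂ] H}
    (hnormal : T * adjoint T = adjoint T * T) {f : H} (hf : ‖f‖ = 1)
    (hrange : LinearMap.range (T : H →ₗ[ℂ] H) = Submodule.span ℂ {f})
    (htr : ⟪f, T f⟫ ≠ 0) :
    T = ⟪f, T f⟫ • (ℂ ∙ f).starProjection := by
  have hspan : ∀ y ∈ ℂ ∙ f, ⟪f, y⟫ • f = y := fun y hy => by
    rw [← Submodule.starProjection_unit_singleton ℂ hf,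
      Submodule.starProjection_eq_self_iff.mpr hy]
  set g := adjoint T f with hg_def
  have hTx : ∀ x, T x = ⟪g, x⟫ • f := fun x => by
    rw [adjoint_inner_left, hspan _ (hrange ▸ LinearMap.mem_range_self (T : H →ₗ[ℂ] H) x)]
  have hnormal_f : ⟪f, T f⟫ • g = ⟪g, g⟫ • f :=
    calc
      _ = adjoint T (T f) := by conv_rhs => rw [hTx f, map_smul, hg_def, adjoint_inner_left]
      _ = T g := (DFunLike.congr_fun hnormal f).symm
      _ = ⟪g, g⟫ • f := hTx g
  have hg : g = starRingEnd ℂ ⟪f, T f⟫ • f := by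
    have hmem : g ∈ ℂ ∙ f := by
      rw [← inv_smul_smul₀ htr g, hnormal_f]
      exact Submodule.smul_mem _ _ (Submodule.smul_mem _ _ (Submodule.mem_span_singleton_self f))
    rw [← hspan g hmem, hg_def, adjoint_inner_right, inner_conj_symm]
  ext x
  rw [hTx, hg, smul_apply, Submodule.starProjection_unit_singleton ℂ hf, inner_smul_left,
    Complex.conj_conj, smul_smul]

/-- for `T` rank one, normal, nonselfadjoint, with `tr T ≠ 0`, TFAE:
(i) `S(T, T*)` is SI; (ii) `‖T‖ = 1` and `|tr T| = 1`; (iii) `S(T, T*)` is simple. -/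
theorem stmt11 (T : H →L[ℂ] H)
    (hnormal : T * adjoint T = adjoint T * T) (hnsa : T ≠ adjoint T)
    (f : H) (hf : ‖f‖ = 1)
    (hrange : LinearMap.range (T : H →ₗ[ℂ] H) = Submodule.span ℂ {f})
    (htr : ⟪f, T f⟫ ≠ 0) :
    List.TFAE [IsSI (genSG T), ‖T‖ = 1 ∧ ‖⟪f, T f⟫‖ = 1,
      IsSimpleSemigroup (genSG T)] := by
  have hT := eq_inner_smul_starProjection_of_range_eq_span hnormal hf hrange htr
  have hf0 : (ℂ ∙ f) ≠ ⊥ := by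
    rw [Ne, Submodule.span_singleton_eq_bot]; rintro rfl; simp at hf
  set P := (ℂ ∙ f).starProjection
  have hP : IsStarProjection P := isStarProjection_starProjection
  have hP0 : P ≠ 0 := norm_ne_zero_iff.mp <| by
    rw [Submodule.norm_starProjection _ hf0]; exact one_ne_zero
  have hnorm : ‖T‖ = ‖⟪f, T f⟫‖ := by
    conv_lhs => rw [hT, norm_smul, Submodule.norm_starProjection _ hf0, mul_one]
  rw [hnorm, and_self]
  generalize ⟪f, T f⟫ = c at hT htr
  subst hT
  tfae_have 1 → 2 := not_imp_not.1 fun hc =>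
    not_isSI_genSG_of_mul_ne_adjoint hnsa (mul_ne_adjoint_of_mem_genSG_smul hP hP0 htr hc)
  tfae_have 3 → 2 := not_imp_not.1 fun hc =>
    not_isSimpleSemigroup_genSG_of_mul_ne_adjoint hnsa
      (mul_ne_adjoint_of_mem_genSG_smul hP hP0 htr hc)
  tfae_have 2 → 1 := fun hc =>
    isSI_genSG_of_forall_exists_mul_eq (exists_mul_eq_of_mem_genSG_smul hP hc)
  tfae_have 2 → 3 := fun hc =>
    isSimpleSemigroup_of_forall_exists_mul_eq (exists_mul_eq_of_mem_genSG_smul hP hc)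
  tfae_finish
end

section
/- Let T be a rank one bounded operator on a complex Hilbert space H that is a partial isometry (T = T T* T). Then T is a power partial isometry (i.e., T^n = T^n (T^n)* T^n for all n ≥ 1) if and only if either tr T = 0 or |tr T| = 1. -/
/-!
An operator whose range is `ℂ f` with `‖f‖ = 1` acts as `T x = ⟪f, T x⟫ f`, so `T² = λ T` with
`λ = ⟪f, T f⟫` and hence `T ^ (m + 1) = λ ^ m T`. For a nonzero partial isometry `T`,
`(c T)(c T)*(c T) = |c|² c T`, so `c T` is a partial isometry iff `c = 0` or `|c| = 1`; and every
power `λ ^ m` has this property iff `λ` has.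
-/

open ContinuousLinearMap
open scoped ComplexInnerProductSpace

variable {H : Type*} [NormedAddCommGroup H] [InnerProductSpace ℂ H] [CompleteSpace H]

def IsPartialIsometry {A : Type*} [Mul A] [Star A] (a : A) : Prop :=
  a = a * star a * a

section Scalars

variable {𝕜 : Type*} [RCLike 𝕜]

theorem RCLike.self_eq_mul_conj_mul_iff (c : 𝕜) :
    c = c * star c * c ↔ c = 0 ∨ ‖c‖ = 1 := by
  have hsq : c * star c * c = (‖c‖ ^ 2 : 𝕜) * c := by
    rw [← RCLike.mul_conj, RCLike.star_def]
  rw [hsq, eq_comm, ← sub_eq_zero, ← sub_one_mul, mul_eq_zero, sub_eq_zero, or_comm]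
  norm_cast
  rw [pow_eq_one_iff_of_nonneg (norm_nonneg c) two_ne_zero]

theorem forall_pow_eq_zero_or_norm_eq_one_iff {K : Type*} [NormedDivisionRing K] (c : K) :
    (∀ m : ℕ, c ^ m = 0 ∨ ‖c ^ m‖ = 1) ↔ c = 0 ∨ ‖c‖ = 1 := by
  refine ⟨fun h ↦ by simpa using h 1, ?_⟩
  rintro (rfl | hc) m
  · rcases m with _ | m <;> simp
  · simp [norm_pow, hc]

end Scalars

section StarAlgebra

variable {𝕜 A : Type*} [RCLike 𝕜] [Ring A] [StarRing A] [Module 𝕜 A] [StarModule 𝕜 A]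
  [IsScalarTower 𝕜 A A] [SMulCommClass 𝕜 A A]

theorem smul_mul_star_smul_mul_smul (c : 𝕜) (a : A) :
    c • a * star (c • a) * (c • a) = (c * star c * c) • (a * star a * a) := by
  simp only [star_smul, smul_mul_assoc, mul_smul_comm, smul_smul]
  ring_nf

theorem IsPartialIsometry.smul_iff [NoZeroSMulDivisors 𝕜 A] {a : A} (ha : IsPartialIsometry a)
    (ha0 : a ≠ 0) (c : 𝕜) : IsPartialIsometry (c • a) ↔ c = 0 ∨ ‖c‖ = 1 := by
  rw [IsPartialIsometry, smul_mul_star_smul_mul_smul, ← ha, (smul_left_injective 𝕜 ha0).eq_iff,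
    RCLike.self_eq_mul_conj_mul_iff]

end StarAlgebra

theorem pow_succ_eq_pow_smul_of_mul_self_eq_smul {R A : Type*} [Monoid R] [Monoid A]
    [MulAction R A] [IsScalarTower R A A] {a : A} {c : R} (h : a * a = c • a) (m : ℕ) :
    a ^ (m + 1) = c ^ m • a := by
  induction m with
  | zero => simp
  | succ m ih => rw [pow_succ, ih, smul_mul_assoc, h, smul_smul, pow_succ]

section RankOne

variable {𝕜 E : Type*} [RCLike 𝕜] [NormedAddCommGroup E] [InnerProductSpace 𝕜 E]

theorem eq_inner_smul_of_mem_span_singleton {f x : E} (hf : ‖f‖ = 1)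
    (hx : x ∈ Submodule.span 𝕜 {f}) : x = inner 𝕜 f x • f := by
  obtain ⟨a, rfl⟩ := Submodule.mem_span_singleton.mp hx
  rw [inner_smul_right, inner_self_eq_norm_sq_to_K, hf]
  simp

theorem ContinuousLinearMap.mul_self_eq_inner_smul_of_range_le_span {T : E →L[𝕜] E} {f : E}
    (hf : ‖f‖ = 1) (hrange : LinearMap.range (T : E →ₗ[𝕜] E) ≤ Submodule.span 𝕜 {f}) :
    T * T = inner 𝕜 f (T f) • T := by
  have hT : ∀ x, T x = inner 𝕜 f (T x) • f := fun x ↦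
    eq_inner_smul_of_mem_span_singleton hf (hrange (LinearMap.mem_range_self _ x))
  ext x
  rw [mul_apply_eq_comp, smul_apply, hT x, map_smul, smul_comm, ← hT f]

end RankOne

/-- a rank one partial isometry `T` is a power partial isometry iff
either `tr T = 0` or `|tr T| = 1`. -/
theorem stmt16 (T : H →L[ℂ] H)
    (hpi : T = T * adjoint T * T)
    (f : H) (hf : ‖f‖ = 1)
    (hrange : LinearMap.range (T : H →ₗ[ℂ] H) = Submodule.span ℂ {f}) :
    (∀ n : ℕ, 1 ≤ n → T ^ n = T ^ n * adjoint (T ^ n) * T ^ n) ↔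
      (⟪f, T f⟫ = 0 ∨ ‖⟪f, T f⟫‖ = 1) := by
  have hT0 : T ≠ 0 := by
    rintro rfl
    have : f = 0 := by simpa using hrange.symm
    simp [this] at hf
  have hpow := pow_succ_eq_pow_smul_of_mul_self_eq_smul
    (mul_self_eq_inner_smul_of_range_le_span hf hrange.le)
  rw [← forall_pow_eq_zero_or_norm_eq_one_iff]
  refine ⟨fun h m ↦ ?_, fun h n hn ↦ ?_⟩
  · rw [← IsPartialIsometry.smul_iff (𝕜 := ℂ) hpi hT0, ← hpow]
    exact h (m + 1) m.succ_pos
  · obtain ⟨m, rfl⟩ := Nat.exists_eq_add_of_le' hn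
    exact hpow m ▸ (IsPartialIsometry.smul_iff hpi hT0 _).mpr (h m)
end
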